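/- Let n be a positive integer, m a positive integer with 2m/(2n+1) = a ∈ ℕ, and define 𝒟_m(u,v) := (2/m) Σ_{l=1}^m cos((l−1/2)πu)·cos((l−1/2)πv). Then for all integers 1 ≤ k, k' ≤ n, 𝒟_m((2k−1)/(2n+1), (2k'−1)/(2n+1)) equals 1 if k = k' and 0 if k ≠ k'. -/

import Mathlib

open Real Finset

/-!
By `2 cos x cos y = cos (x - y) + cos (x + y)`, `𝒟_m(u, v)` is `1/m` times the sum of the
half-integer cosine sums `Σ_{l=1}^m cos((l - 1/2) θ)` at `θ = π(u - v)` and `θ = π(u + v)`.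
Multiplying such a sum by `2 sin(θ/2)` telescopes it to `sin(mθ)`. At the sampling points both
angles are `2πj/(2n+1)` with `j ∈ ℤ`, and `2m = a(2n+1)` makes `mθ = πaj` a multiple of `π`,
so the sum vanishes unless `2n+1 ∣ j`; for `1 ≤ k, k' ≤ n` this happens only for `u - v` with
`k = k'`, where the sum is `m`.
-/

/-- The SIML kernel `𝒟_m(u,v) = (2/m) Σ_{l=1}^m cos((l−1/2)πu) cos((l−1/2)πv)`. -/
noncomputable def Dker (m : ℕ) (u v : ℝ) : ℝ :=
  (2 / (m : ℝ)) * ∑ l ∈ Finset.Icc 1 m,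
    Real.cos (((l : ℝ) - 1 / 2) * π * u) * Real.cos (((l : ℝ) - 1 / 2) * π * v)

noncomputable def halfCosSum (m : ℕ) (θ : ℝ) : ℝ :=
  ∑ l ∈ Icc 1 m, cos (((l : ℝ) - 1 / 2) * θ)

lemma halfCosSum_zero_right (m : ℕ) : halfCosSum m 0 = m := by
  simp [halfCosSum]

lemma two_mul_sin_half_mul_halfCosSum (m : ℕ) (θ : ℝ) :
    2 * sin (θ / 2) * halfCosSum m θ = sin (m * θ) := by
  induction m with
  | zero => simp [halfCosSum]
  | succ m ih =>
    have hstep :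
        sin ((m + 1 : ℝ) * θ) - sin (m * θ) = 2 * sin (θ / 2) * cos ((m + 1 - 1 / 2) * θ) := by
      rw [sin_sub_sin]; ring_nf
    rw [halfCosSum, sum_Icc_succ_top (by omega), ← halfCosSum, mul_add, ih]
    push_cast
    linear_combination -hstep

lemma halfCosSum_eq_zero {N m a : ℕ} (hN : 0 < N) (ha : 2 * m = a * N) {j : ℤ}
    (hj : ¬ (N : ℤ) ∣ j) : halfCosSum m (2 * π * j / N) = 0 := by
  have hNR : (N : ℝ) ≠ 0 := by positivity
  have hsin_half : sin (2 * π * j / N / 2) ≠ 0 := by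
    rw [Ne, sin_eq_zero_iff]
    rintro ⟨i, hi⟩
    refine hj ⟨i, ?_⟩
    have : (j : ℝ) = N * i := by field_simp at hi; linarith [pi_pos]
    exact_mod_cast this
  have hsin_m : sin (m * (2 * π * j / N)) = 0 := by
    have haR : (2 * m : ℝ) = a * N := by exact_mod_cast ha
    rw [sin_eq_zero_iff]
    refine ⟨a * j, ?_⟩
    rw [Int.cast_mul, Int.cast_natCast, mul_div_assoc', eq_div_iff hNR]
    linear_combination (-π * j) * haR
  have htelescope := two_mul_sin_half_mul_halfCosSum m (2 * π * j / N)
  rw [hsin_m] at htelescope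
  exact (mul_eq_zero.mp htelescope).resolve_left (mul_ne_zero two_ne_zero hsin_half)

lemma Dker_eq_halfCosSum (m : ℕ) (u v : ℝ) :
    Dker m u v = (halfCosSum m (π * (u - v)) + halfCosSum m (π * (u + v))) / m := by
  rw [Dker, halfCosSum, halfCosSum, ← sum_add_distrib, mul_sum, sum_div]
  refine sum_congr rfl fun l _ => ?_
  rw [div_mul_eq_mul_div, ← mul_assoc, two_mul_cos_mul_cos]
  ring_nf

lemma not_dvd_of_abs_pos_lt {N j : ℤ} (hpos : 0 < |j|) (hlt : |j| < N) : ¬ N ∣ j :=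
  fun hd => hpos.ne' (abs_eq_zero.mpr (Int.eq_zero_of_abs_lt_dvd hd hlt))

theorem stmt9 (n m a : ℕ) (hm : 0 < m) (ha : 2 * m = a * (2 * n + 1))
    (k k' : ℕ) (hk : 1 ≤ k) (hk2 : k ≤ n) (hk' : 1 ≤ k') (hk'2 : k' ≤ n) :
    Dker m ((2 * (k : ℝ) - 1) / (2 * n + 1)) ((2 * (k' : ℝ) - 1) / (2 * n + 1))
      = if k = k' then 1 else 0 := by
  have hN : 0 < 2 * n + 1 := by omega
  have hdiff : π * ((2 * (k : ℝ) - 1) / (2 * n + 1) - (2 * (k' : ℝ) - 1) / (2 * n + 1))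
      = 2 * π * ((k - k' : ℤ) : ℝ) / ((2 * n + 1 : ℕ) : ℝ) := by
    push_cast; field_simp; ring
  have hsum : π * ((2 * (k : ℝ) - 1) / (2 * n + 1) + (2 * (k' : ℝ) - 1) / (2 * n + 1))
      = 2 * π * ((k + k' - 1 : ℤ) : ℝ) / ((2 * n + 1 : ℕ) : ℝ) := by
    push_cast; field_simp; ring
  have hcross := halfCosSum_eq_zero hN ha (not_dvd_of_abs_pos_lt (j := k + k' - 1)
    (abs_pos.mpr (by omega)) (abs_lt.mpr ⟨by omega, by omega⟩))
  rw [Dker_eq_halfCosSum, hsum, hcross, add_zero, hdiff]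
  split_ifs with hkk
  · subst hkk
    rw [sub_self, Int.cast_zero, mul_zero, zero_div, halfCosSum_zero_right,
      div_self (by positivity)]
  · rw [halfCosSum_eq_zero hN ha (not_dvd_of_abs_pos_lt (abs_pos.mpr (by omega))
      (abs_lt.mpr ⟨by omega, by omega⟩)), zero_div]
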